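/- arXiv:1606.07717 — 2 statements merged into one kernel-verified Lean document; each statement's English description precedes it below -/
import Mathlib

section
/- For any real constants a, c, and k_d, the function v(r,t) = exp(−k_d·t)·exp(a·(r−c) + a²·t)·erfc((r−c)/(2√t) + a·√t)/r satisfies ∂v/∂t(r,t) = ∂²v/∂r²(r,t) + (2/r)·∂v/∂r(r,t) − k_d·v(r,t) for all r > 0 and t > 0. -/
/-!
Write `n = (r - c) / (2√t)` and `m = a√t`, so that `a (r - c) + a² t = 2nm + m²` and the term is
`exp (-k_d t) · W(n, m) / r` with `W(n, m) = exp (2nm + m²) · erfc (n + m)`. Because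
`exp (2nm + m²) · exp (-(n + m)²) = exp (-n²)`, the derivatives of `W` along any path `(n, m)` are
again combinations of `W` and a Gaussian in `n`; following the two paths `r ↦ (n, m)` and
`t ↦ (n, m)` shows that `G(r, t) = W(n, m)` solves the heat equation `G_t = G_rr`. The factor
`exp (-k_d t)` produces the degradation term, and dividing by `r` turns `∂²` into the radial
Laplacian: `(∂_r² + (2/r) ∂_r) (f / r) = f'' / r`.
-/

/-- The complementary error function `erfc(x) = (2/√π)·∫_x^∞ exp(−u²) du`. -/
noncomputable def erfc (x : ℝ) : ℝ :=
  (2 / Real.sqrt Real.pi) * ∫ u in Set.Ioi x, Real.exp (-u ^ 2)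

/-- The W-type term of the Green's function:
`v(r,t) = exp(−k_d·t)·exp(a·(r−c) + a²·t)·erfc((r−c)/(2√t) + a·√t)/r`. -/
noncomputable def wTerm (a c k_d : ℝ) (r t : ℝ) : ℝ :=
  Real.exp (-k_d * t) * Real.exp (a * (r - c) + a ^ 2 * t)
    * erfc ((r - c) / (2 * Real.sqrt t) + a * Real.sqrt t) / r

open Real MeasureTheory Set Filter Topology

theorem hasDerivAt_integral_Ioi {E : Type*} [NormedAddCommGroup E] [NormedSpace ℝ E]
    [CompleteSpace E] {f : ℝ → E} {a : ℝ} (hf : Continuous f) (hfa : IntegrableOn f (Ioi a))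
    (x : ℝ) : HasDerivAt (fun y => ∫ u in Ioi y, f u) (-f x) x := by
  have hsplit : (fun y => ∫ u in Ioi y, f u) = fun y => (∫ u in y..a, f u) + ∫ u in Ioi a, f u :=
    funext fun y => (intervalIntegral.integral_interval_add_Ioi'
      (hf.intervalIntegrable y a) hfa).symm
  rw [hsplit]
  exact (intervalIntegral.integral_hasDerivAt_left (hf.intervalIntegrable x a)
    (hf.stronglyMeasurableAtFilter _ _) hf.continuousAt).add_const _

theorem hasDerivAt_erfc (x : ℝ) : HasDerivAt erfc (-(2 / √π * exp (-x ^ 2))) x := by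
  have hgauss : Integrable fun u : ℝ => exp (-u ^ 2) := by
    simpa using integrable_exp_neg_mul_sq (b := 1) one_pos
  have := (hasDerivAt_integral_Ioi (by fun_prop) hgauss.integrableOn (a := 0) x).const_mul
    (2 / √π)
  rwa [mul_neg] at this

noncomputable def W (n m : ℝ) : ℝ := exp (2 * n * m + m ^ 2) * erfc (n + m)

theorem HasDerivAt.W {n m : ℝ → ℝ} {n' m' x : ℝ} (hn : HasDerivAt n n' x)
    (hm : HasDerivAt m m' x) :
    HasDerivAt (fun s => W (n s) (m s))
      (2 * (m x * n' + (n x + m x) * m') * W (n x) (m x)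
        - 2 / √π * Real.exp (-n x ^ 2) * (n' + m')) x := by
  have hexp : Real.exp (2 * n x * m x + m x ^ 2) * Real.exp (-(n x + m x) ^ 2)
      = Real.exp (-n x ^ 2) := by
    rw [← Real.exp_add]; ring_nf
  have hφ : HasDerivAt (fun s => 2 * n s * m s + m s ^ 2)
      (2 * (n' * m x + n x * m') + 2 * m x * m') x :=
    (((hn.const_mul 2).fun_mul hm).fun_add (hm.fun_pow 2)).congr_deriv <| by
      simp only [Nat.cast_ofNat, Nat.add_one_sub_one, pow_one]
      ring
  have herfc : HasDerivAt (fun s => erfc (n s + m s))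
      (-(2 / √π * Real.exp (-(n x + m x) ^ 2)) * (n' + m')) x :=
    (hasDerivAt_erfc _).comp x (hn.fun_add hm)
  refine (hφ.exp.fun_mul herfc).congr_deriv ?_
  rw [← hexp]
  unfold _root_.W
  ring

section
variable (a c : ℝ) {t : ℝ}

noncomputable def wProfile (r t : ℝ) : ℝ := W ((r - c) / (2 * √t)) (a * √t)

theorem hasDerivAt_wProfile_radius (ht : 0 < t) (r : ℝ) :
    HasDerivAt (wProfile a c · t)
      (a * wProfile a c r t - exp (-((r - c) / (2 * √t)) ^ 2) / (√π * √t)) r := by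
  have hn : HasDerivAt (fun r => (r - c) / (2 * √t)) (1 / (2 * √t)) r :=
    ((hasDerivAt_id r).sub_const c).div_const _
  refine (hn.W (hasDerivAt_const r (a * √t))).congr_deriv ?_
  have hs : 0 < √t := sqrt_pos.2 ht
  unfold wProfile
  field_simp
  ring

theorem hasDerivAt_wProfile_radius_deriv (ht : 0 < t) (r : ℝ) :
    HasDerivAt (fun r => a * wProfile a c r t - exp (-((r - c) / (2 * √t)) ^ 2) / (√π * √t))
      (a ^ 2 * wProfile a c r t
        + (r - c - 2 * a * t) / (2 * √π * t * √t) * exp (-((r - c) / (2 * √t)) ^ 2)) r := by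
  have hn : HasDerivAt (fun r => (r - c) / (2 * √t)) (1 / (2 * √t)) r :=
    ((hasDerivAt_id r).sub_const c).div_const _
  have hgauss := ((hn.fun_pow 2).fun_neg.exp).div_const (√π * √t)
  refine (((hasDerivAt_wProfile_radius a c ht r).const_mul a).sub hgauss).congr_deriv ?_
  obtain ⟨s, hs, rfl⟩ : ∃ s, 0 < s ∧ t = s ^ 2 := ⟨√t, sqrt_pos.2 ht, (sq_sqrt ht.le).symm⟩
  rw [sqrt_sq hs.le]
  set g := exp (-((r - c) / (2 * s)) ^ 2)
  have hs0 : s ≠ 0 := hs.ne'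
  simp only [Nat.cast_ofNat, Nat.add_one_sub_one, pow_one]
  field_simp
  ring

theorem hasDerivAt_wProfile_time (ht : 0 < t) (r : ℝ) :
    HasDerivAt (wProfile a c r ·)
      (a ^ 2 * wProfile a c r t
        + (r - c - 2 * a * t) / (2 * √π * t * √t) * exp (-((r - c) / (2 * √t)) ^ 2)) t := by
  have hsqrt := hasDerivAt_sqrt ht.ne'
  have hn : HasDerivAt (fun t => (r - c) / (2 * √t)) (-(r - c) / (4 * t * √t)) t := by
    refine ((hasDerivAt_const t (r - c)).div (hsqrt.const_mul 2) (by positivity)).congr_deriv ?_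
    field_simp
    rw [sq_sqrt ht.le]
    ring
  refine (hn.W (hsqrt.const_mul a)).congr_deriv ?_
  obtain ⟨s, hs, rfl⟩ : ∃ s, 0 < s ∧ t = s ^ 2 := ⟨√t, sqrt_pos.2 ht, (sq_sqrt ht.le).symm⟩
  unfold wProfile
  rw [sqrt_sq hs.le]
  field_simp
  ring

end

theorem wTerm_eq_wProfile {a c k_d t : ℝ} (ht : 0 < t) (r : ℝ) :
    wTerm a c k_d r t = exp (-k_d * t) * wProfile a c r t / r := by
  have hexponent :
      2 * ((r - c) / (2 * √t)) * (a * √t) + (a * √t) ^ 2 = a * (r - c) + a ^ 2 * t := by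
    have hs : 0 < √t := sqrt_pos.2 ht
    field_simp
    rw [sq_sqrt ht.le]
    ring
  rw [wTerm, wProfile, W, hexponent, mul_assoc (exp _)]

noncomputable def radialLaplacian (u : ℝ → ℝ) (r : ℝ) : ℝ :=
  deriv (deriv u) r + 2 / r * deriv u r

theorem radialLaplacian_div_id {f f' : ℝ → ℝ} {f'' x : ℝ}
    (hf : ∀ᶠ y in 𝓝 x, HasDerivAt f (f' y) y) (hf' : HasDerivAt f' f'' x) (hx : x ≠ 0) :
    radialLaplacian (fun y => f y / y) x = f'' / x := by
  have hquot : ∀ᶠ y in 𝓝 x, HasDerivAt (fun y => f y / y) ((f' y * y - f y) / y ^ 2) y := by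
    filter_upwards [hf, eventually_ne_nhds hx] with y hfy hy
    exact (hfy.div (hasDerivAt_id y) hy).congr_deriv (by simp)
  have hderiv : deriv (fun y => f y / y) =ᶠ[𝓝 x] fun y => (f' y * y - f y) / y ^ 2 :=
    hquot.mono fun y hy => hy.deriv
  have hquot' : HasDerivAt (fun y => (f' y * y - f y) / y ^ 2)
      ((f'' * x ^ 2 - 2 * (f' x * x - f x)) / x ^ 3) x := by
    refine (((hf'.fun_mul (hasDerivAt_id' x)).fun_sub hf.self_of_nhds).fun_div
      (hasDerivAt_pow 2 x) (pow_ne_zero 2 hx)).congr_deriv ?_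
    field_simp
    ring
  rw [radialLaplacian, hderiv.deriv_eq, hquot'.deriv, hquot.self_of_nhds.deriv]
  field_simp
  ring

/-- For any real constants `a`, `c`, `k_d`, the function
`v(r,t) = exp(−k_d·t)·exp(a·(r−c) + a²·t)·erfc((r−c)/(2√t) + a·√t)/r` satisfies the
dimensionless radial reaction–diffusion equation
`∂v/∂t = ∂²v/∂r² + (2/r)·∂v/∂r − k_d·v` for all `r > 0`, `t > 0`. -/
theorem wTerm_satisfies_radial_reaction_diffusion (a c k_d : ℝ) :
    ∀ r t : ℝ, 0 < r → 0 < t →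
      deriv (fun t' : ℝ => wTerm a c k_d r t') t
        = deriv (fun r' : ℝ => deriv (fun r'' : ℝ => wTerm a c k_d r'' t) r') r
          + (2 / r) * deriv (fun r' : ℝ => wTerm a c k_d r' t) r
          - k_d * wTerm a c k_d r t := by
  intro r t hr ht
  have hspace :
      (fun r' => wTerm a c k_d r' t) = fun r' => exp (-k_d * t) * wProfile a c r' t / r' :=
    funext (wTerm_eq_wProfile ht)
  have htime : (fun t' => wTerm a c k_d r t')
      =ᶠ[𝓝 t] fun t' => exp (-k_d * t') * wProfile a c r t' / r := by
    filter_upwards [lt_mem_nhds ht] with t' ht' using wTerm_eq_wProfile ht' r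
  have hdecay : HasDerivAt (fun t' => exp (-k_d * t')) (-k_d * exp (-k_d * t)) t := by
    simpa [mul_comm] using ((hasDerivAt_id t).const_mul (-k_d)).exp
  have hheat := (hdecay.fun_mul (hasDerivAt_wProfile_time a c ht r)).div_const r
  have hlap := radialLaplacian_div_id
    (.of_forall fun y => (hasDerivAt_wProfile_radius a c ht y).const_mul (exp (-k_d * t)))
    ((hasDerivAt_wProfile_radius_deriv a c ht r).const_mul _) hr.ne'
  change _ = radialLaplacian (fun r' => wTerm a c k_d r' t) r - _
  rw [htime.deriv_eq, hheat.deriv, hspace, hlap, wTerm_eq_wProfile ht]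
  ring
end

section
/- (Boundary homogenization: modified forward rate.) Let D_A > 0, a > 0, k_f > 0, r0 > 0, and φ ∈ (0,1). Define k* = 4π·D_A·k_f·φ / ( k_f·a·(1 − φ) + 4π·D_A ). Then k* > 0 and (a/r0)·( k_f·a/(k_f·a + 4π·D_A) )·φ = (a/r0)·( k*·a/(k*·a + 4π·D_A) ); moreover, k* is the unique positive real number with this property. -/
/-- (Boundary homogenization: modified forward rate.) For `D_A > 0`, `a > 0`, `k_f > 0`,
`r0 > 0`, and `φ ∈ (0,1)`, the modified forward rate
`k* = 4π·D_A·k_f·φ/(k_f·a·(1 − φ) + 4π·D_A)` is positive, satisfies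
`(a/r0)·(k_f·a/(k_f·a + 4π·D_A))·φ = (a/r0)·(k*·a/(k*·a + 4π·D_A))`, and is the unique
positive real number with this property. -/
theorem modified_forward_rate
    (D_A a k_f r0 φ : ℝ) (hD : 0 < D_A) (ha : 0 < a) (hkf : 0 < k_f) (hr0 : 0 < r0)
    (hφ : φ ∈ Set.Ioo (0 : ℝ) 1) :
    0 < 4 * Real.pi * D_A * k_f * φ / (k_f * a * (1 - φ) + 4 * Real.pi * D_A)
    ∧ (a / r0) * (k_f * a / (k_f * a + 4 * Real.pi * D_A)) * φ
        = (a / r0) *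
            ((4 * Real.pi * D_A * k_f * φ / (k_f * a * (1 - φ) + 4 * Real.pi * D_A)) * a
              / ((4 * Real.pi * D_A * k_f * φ / (k_f * a * (1 - φ) + 4 * Real.pi * D_A)) * a
                  + 4 * Real.pi * D_A))
    ∧ ∀ k : ℝ, 0 < k →
        (a / r0) * (k_f * a / (k_f * a + 4 * Real.pi * D_A)) * φ
          = (a / r0) * (k * a / (k * a + 4 * Real.pi * D_A)) →
        k = 4 * Real.pi * D_A * k_f * φ / (k_f * a * (1 - φ) + 4 * Real.pi * D_A) := by
  obtain ⟨hφ0, hφ1⟩ := hφ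
  have hpi : (0:ℝ) < Real.pi := Real.pi_pos
  have hP : (0:ℝ) < 4 * Real.pi * D_A := by positivity
  have hden : (0:ℝ) < k_f * a * (1 - φ) + 4 * Real.pi * D_A := by
    have : (0:ℝ) < 1 - φ := by linarith
    positivity
  have hkstar : 0 < 4 * Real.pi * D_A * k_f * φ / (k_f * a * (1 - φ) + 4 * Real.pi * D_A) := by
    positivity
  have hd1 : k_f * a + 4 * Real.pi * D_A ≠ 0 := by positivity
  have hkstara : 4 * Real.pi * D_A * k_f * φ / (k_f * a * (1 - φ) + 4 * Real.pi * D_A) * a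
      + 4 * Real.pi * D_A ≠ 0 := by positivity
  refine ⟨hkstar, ?_, ?_⟩
  · field_simp
    ring
  · intro k hk heq
    have hka : k * a + 4 * Real.pi * D_A ≠ 0 := by positivity
    have har0 : a / r0 ≠ 0 := by positivity
    rw [mul_assoc] at heq
    have heq2 : k_f * a / (k_f * a + 4 * Real.pi * D_A) * φ
        = k * a / (k * a + 4 * Real.pi * D_A) := mul_left_cancel₀ (by positivity) heq
    rw [div_mul_eq_mul_div, div_eq_div_iff hd1 hka] at heq2
    rw [eq_div_iff hden.ne']
    nlinarith [heq2]
end
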